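/- Let ω > 0 and let λ be a nonzero complex number such that it is not the case that Re(λ) = 0 and |λ| ≤ ω. Then ∫_{−ω}^{ω} (iν − λ)⁻¹ dν = −2·atan(ω/λ), where the integral is the interval integral of the ℂ-valued function ν ↦ (iν − λ)⁻¹ of the real variable ν. -/

import Mathlib

open Complex MeasureTheory intervalIntegral

/-- Principal complex arctangent: `atan z = (1/(2i))·(log(1+iz) − log(1−iz))`,
where `log` is the principal branch of the complex logarithm. -/
noncomputable def catan (z : ℂ) : ℂ :=
  (2 * Complex.I)⁻¹ * (Complex.log (1 + Complex.I * z) - Complex.log (1 - Complex.I * z))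

/-!
Over the symmetric interval `[-ω, ω]` only the even part `-λ / (λ² + ν²)` of `(iν - λ)⁻¹`
contributes, and it is the derivative of `ν ↦ -atan (ν / λ)`. The hypothesis on `λ` is exactly
what keeps `1 ± iν/λ` off the branch cut of `log` for `|ν| ≤ ω`, so this antiderivative is
valid on the whole interval, and `atan` being odd gives the value `-2 atan (ω / λ)`.
-/

theorem IntervalIntegrable.comp_neg_symmetric {E : Type*} [NormedAddCommGroup E] {f : ℝ → E}
    {a : ℝ} (hf : IntervalIntegrable f volume (-a) a) :
    IntervalIntegrable (fun x ↦ f (-x)) volume (-a) a := by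
  simpa using ((IntervalIntegrable.iff_comp_neg).1 hf).symm

theorem intervalIntegral.integral_symmetric_eq_integral_half_add_comp_neg {E : Type*}
    [NormedAddCommGroup E] [NormedSpace ℝ E] {f : ℝ → E} {a : ℝ}
    (hf : IntervalIntegrable f volume (-a) a) :
    ∫ x in -a..a, f x = ∫ x in -a..a, (2 : ℝ)⁻¹ • (f x + f (-x)) := by
  rw [integral_smul, integral_add hf hf.comp_neg_symmetric, integral_comp_neg, neg_neg,
    ← two_smul ℝ, smul_smul, inv_mul_cancel₀ two_ne_zero, one_smul]

theorem catan_neg (z : ℂ) : catan (-z) = -catan z := by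
  simp only [catan, mul_neg, sub_neg_eq_add, ← sub_eq_add_neg]
  ring

theorem hasDerivAt_catan {z : ℂ} (h₁ : 1 + I * z ∈ slitPlane) (h₂ : 1 - I * z ∈ slitPlane) :
    HasDerivAt catan (1 + z ^ 2)⁻¹ z := by
  have hlog₁ := (((hasDerivAt_id z).const_mul I).const_add 1).clog h₁
  have hlog₂ := (((hasDerivAt_id z).const_mul I).const_sub 1).clog h₂
  refine ((hlog₁.sub hlog₂).const_mul (2 * I)⁻¹).congr_deriv ?_
  have h₁' := slitPlane_ne_zero h₁
  have h₂' := slitPlane_ne_zero h₂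
  have hfactor : 1 + z ^ 2 = (1 + I * z) * (1 - I * z) := by linear_combination z ^ 2 * I_sq
  rw [hfactor]
  simp only [id]
  field_simp
  ring

theorem one_add_I_mul_ofReal_div_mem_slitPlane {ω ν : ℝ} {lam : ℂ} (hlam : lam ≠ 0)
    (h : ¬ (lam.re = 0 ∧ ‖lam‖ ≤ ω)) (hν : |ν| ≤ ω) :
    1 + I * (ν / lam) ∈ slitPlane := by
  have hnormSq : 0 < normSq lam := normSq_pos.mpr hlam
  rw [mem_slitPlane_iff]
  rcases eq_or_ne lam.re 0 with hre | hre
  · left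
    have hnorm : ‖lam‖ = |lam.im| := by
      rw [norm_def, normSq_apply, hre]
      simp [Real.sqrt_mul_self_eq_abs]
    have hlt : |ν| < |lam.im| := hν.trans_lt (hnorm ▸ lt_of_not_ge fun hle ↦ h ⟨hre, hle⟩)
    have hb : 0 < |lam.im| := (abs_nonneg ν).trans_lt hlt
    have hb0 : lam.im ≠ 0 := abs_pos.1 hb
    have hquot : |ν / lam.im| < 1 := by rwa [abs_div, div_lt_one hb]
    have hnormSq_eq : normSq lam = lam.im ^ 2 := by rw [normSq_apply, hre]; ring
    have hre_eq : (1 + I * (ν / lam)).re = 1 + ν / lam.im := by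
      simp only [add_re, one_re, mul_re, I_re, I_im, div_re, div_im, ofReal_re, ofReal_im,
        hnormSq_eq, hre]
      field_simp
      ring
    rw [hre_eq]
    linarith [(abs_lt.1 hquot).1]
  · rcases eq_or_ne ν 0 with rfl | hν0
    · simp
    · right
      simp [div_re, hν0, hre, hnormSq.ne']

theorem I_mul_ofReal_sub_ne_zero {ω ν : ℝ} {lam : ℂ} (h : ¬ (lam.re = 0 ∧ ‖lam‖ ≤ ω))
    (hν : |ν| ≤ ω) : I * ν - lam ≠ 0 := by
  rw [sub_ne_zero]
  rintro rfl
  exact h ⟨by simp, by simpa using hν⟩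

theorem inv_I_mul_sub_add_inv_I_mul_neg_sub {x lam : ℂ} (hlam : lam ≠ 0)
    (hplus : I * x - lam ≠ 0) (hminus : I * -x - lam ≠ 0) :
    (I * x - lam)⁻¹ + (I * -x - lam)⁻¹ = -2 * ((1 + (x / lam) ^ 2)⁻¹ * lam⁻¹) := by
  have hfactor : 1 + (x / lam) ^ 2 = (I * x - lam) * (I * -x - lam) / lam ^ 2 := by
    field_simp
    linear_combination x ^ 2 * I_sq
  rw [hfactor, inv_add_inv hplus hminus]
  field_simp
  ring

theorem hasDerivAt_catan_ofReal_div {ω ν : ℝ} {lam : ℂ} (hlam : lam ≠ 0)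
    (h : ¬ (lam.re = 0 ∧ ‖lam‖ ≤ ω)) (hν : |ν| ≤ ω) :
    HasDerivAt (fun t : ℝ ↦ catan (t / lam)) ((1 + (ν / lam) ^ 2)⁻¹ * lam⁻¹) ν := by
  have hplus := one_add_I_mul_ofReal_div_mem_slitPlane hlam h hν
  have hminus : 1 - I * (ν / lam) ∈ slitPlane := by
    simpa [neg_div, ← sub_eq_add_neg] using
      one_add_I_mul_ofReal_div_mem_slitPlane (ν := -ν) hlam h (by rwa [abs_neg])
  simpa using ((hasDerivAt_catan hplus hminus).comp (ν : ℂ)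
    ((hasDerivAt_id (ν : ℂ)).div_const lam)).comp_ofReal

theorem stmt_7 (ω : ℝ) (hω : 0 < ω) (lam : ℂ) (hlam : lam ≠ 0)
    (h : ¬ (lam.re = 0 ∧ ‖lam‖ ≤ ω)) :
    (∫ ν : ℝ in (-ω)..ω, (Complex.I * (ν : ℂ) - lam)⁻¹) = -2 * catan ((ω : ℂ) / lam) := by
  have habs : ∀ ν ∈ Set.uIcc (-ω) ω, |ν| ≤ ω := by
    intro ν hν
    rw [Set.uIcc_of_le (by linarith)] at hν
    exact abs_le.2 hν
  have hint : IntervalIntegrable (fun ν : ℝ ↦ (I * ν - lam)⁻¹) volume (-ω) ω :=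
    (ContinuousOn.inv₀ (by fun_prop)
      fun ν hν ↦ I_mul_ofReal_sub_ne_zero h (habs ν hν)).intervalIntegrable
  have hderiv : ∀ ν ∈ Set.uIcc (-ω) ω, HasDerivAt (fun t : ℝ ↦ -catan (t / lam))
      ((2 : ℝ)⁻¹ • ((I * ν - lam)⁻¹ + (I * ↑(-ν) - lam)⁻¹)) ν := by
    intro ν hν
    refine (hasDerivAt_catan_ofReal_div hlam h (habs ν hν)).neg.congr_deriv ?_
    have hplus := I_mul_ofReal_sub_ne_zero h (habs ν hν)
    have hminus : I * ↑(-ν) - lam ≠ 0 := I_mul_ofReal_sub_ne_zero h (by simpa using habs ν hν)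
    push_cast at hminus ⊢
    rw [inv_I_mul_sub_add_inv_I_mul_neg_sub hlam hplus hminus, Complex.real_smul]
    push_cast
    ring
  rw [integral_symmetric_eq_integral_half_add_comp_neg hint,
    integral_eq_sub_of_hasDerivAt hderiv ((hint.add hint.comp_neg_symmetric).smul (2 : ℝ)⁻¹)]
  push_cast
  rw [neg_div, catan_neg]
  ring
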